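/- arXiv:2111.01239 — 2 statements merged into one kernel-verified Lean document; each statement's English description precedes it below -/
import Mathlib

section
/- For exponential mortality p(t)=e^{-λt} with λ>0, the unloaded life-only annuity price is a(r)=1/(r+λ), and the fair cash-refund price a*(r), the unique positive solution of ∫_{a*}^∞ e^{-rt}e^{-λt}dt = r∫_0^{a*} e^{-rt}(a*−t)e^{-λt}dt, satisfies a*(r) = (1/λ)[log(1/r) − log log(1/r) + o(log log(1/r))] as r↓0; in particular a*(r)→∞ and a*(r)/((1/λ)log(1/r)) → 1 as r↓0. -/
open MeasureTheory Set Filter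
open scoped Topology

private lemma int_exp_Ioi (s a : ℝ) (hs : 0 < s) :
    ∫ t in Ioi a, Real.exp (-(s * t)) = Real.exp (-(s * a)) / s := by
  have hderiv : ∀ x ∈ Ici a, HasDerivAt (fun t => -Real.exp (-(s * t)) / s)
      (Real.exp (-(s * x))) x := by
    intro x _
    have h1 : HasDerivAt (fun t : ℝ => -(s * t)) (-s) x := by
      exact ((hasDerivAt_id x).const_mul s).neg.congr_deriv (by simp)
    have h2 := (h1.exp).neg.div_const s
    refine h2.congr_deriv ?_
    field_simp
  have hint : IntegrableOn (fun x : ℝ => Real.exp (-(s * x))) (Ioi a) := by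
    simpa [neg_mul] using exp_neg_integrableOn_Ioi a hs
  have hlim : Tendsto (fun t => -Real.exp (-(s * t)) / s) atTop (𝓝 0) := by
    have h0 : Tendsto (fun t : ℝ => Real.exp (-(s * t))) atTop (𝓝 0) := by
      have hb : Tendsto (fun t : ℝ => -(s * t)) atTop atBot := by
        apply tendsto_neg_atTop_atBot.comp
        simpa using tendsto_id.const_mul_atTop hs
      simpa [Function.comp_def] using Real.tendsto_exp_atBot.comp hb
    simpa using h0.neg.div_const s
  rw [MeasureTheory.integral_Ioi_of_hasDerivAt_of_tendsto' hderiv hint hlim]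
  ring

private lemma int_interval (s a : ℝ) (hs : 0 < s) :
    ∫ t in (0:ℝ)..a, (a - t) * Real.exp (-(s * t))
      = a / s - 1 / s ^ 2 + Real.exp (-(s * a)) / s ^ 2 := by
  have hderiv : ∀ x ∈ Set.uIcc (0:ℝ) a, HasDerivAt
      (fun t => -(Real.exp (-(s * t)) * ((a - t) / s - 1 / s ^ 2)))
      ((a - x) * Real.exp (-(s * x))) x := by
    intro x _
    have h1 : HasDerivAt (fun t : ℝ => -(s * t)) (-s) x := by
      exact ((hasDerivAt_id x).const_mul s).neg.congr_deriv (by simp)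
    have h2 : HasDerivAt (fun t : ℝ => (a - t) / s - 1 / s ^ 2) (-1 / s) x := by
      have h3 : HasDerivAt (fun t : ℝ => a - t) (-1) x := by
        simpa using (hasDerivAt_id x).const_sub a
      exact (h3.div_const s).sub_const (1 / s ^ 2)
    have h4 := (h1.exp.mul h2).neg
    refine h4.congr_deriv ?_
    field_simp
    ring
  have hcont : IntervalIntegrable (fun x => (a - x) * Real.exp (-(s * x)))
      volume 0 a := (Continuous.intervalIntegrable (by continuity) _ _)
  rw [intervalIntegral.integral_eq_sub_of_hasDerivAt hderiv hcont]
  have hs' : s ≠ 0 := hs.ne'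
  field_simp
  simp only [mul_zero, neg_zero, Real.exp_zero]
  ring

private lemma key_eq (lam r a : ℝ) (hlam : 0 < lam) (hr : 0 < r)
    (heq : (∫ t in Ioi a, Real.exp (-(r * t)) * Real.exp (-(lam * t))) =
        r * ∫ t in (0:ℝ)..a, Real.exp (-(r * t)) * (a - t) * Real.exp (-(lam * t))) :
    lam * Real.exp (-((r + lam) * a)) = r * ((r + lam) * a - 1) := by
  have hs : 0 < r + lam := by linarith
  have hptw : ∀ t : ℝ, Real.exp (-(r * t)) * (a - t) * Real.exp (-(lam * t))
      = (a - t) * Real.exp (-((r + lam) * t)) := by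
    intro t
    rw [mul_right_comm, ← Real.exp_add, show -(r*t) + -(lam*t) = -((r+lam)*t) by ring]
    ring
  have hptw2 : ∀ t : ℝ, Real.exp (-(r * t)) * Real.exp (-(lam * t))
      = Real.exp (-((r + lam) * t)) := by
    intro t
    rw [← Real.exp_add, show -(r*t) + -(lam*t) = -((r+lam)*t) by ring]
  simp only [hptw, hptw2] at heq
  rw [int_exp_Ioi _ _ hs, int_interval _ _ hs] at heq
  have hs' : (r + lam) ≠ 0 := hs.ne'
  field_simp at heq
  have h5 : ((r+lam)^4) * (lam * Real.exp (-((r+lam)*a)) - r * ((r+lam)*a - 1)) = 0 := by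
    linear_combination (r+lam)^4 * heq
  rcases mul_eq_zero.mp h5 with h | h
  · exact absurd h (pow_ne_zero _ hs')
  · linarith

theorem exponential_mortality_cria_asymptotics_low_rates
    (lam : ℝ) (hlam : 0 < lam)
    (astar : ℝ → ℝ)
    (hsol : ∀ r, 0 < r → 0 < astar r ∧
      (∫ t in Ioi (astar r), Real.exp (-(r * t)) * Real.exp (-(lam * t))) =
        r * ∫ t in (0 : ℝ)..(astar r),
          Real.exp (-(r * t)) * (astar r - t) * Real.exp (-(lam * t)))
    (huniq : ∀ r, 0 < r → ∀ α, 0 < α →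
      ((∫ t in Ioi α, Real.exp (-(r * t)) * Real.exp (-(lam * t))) =
        r * ∫ t in (0 : ℝ)..α, Real.exp (-(r * t)) * (α - t) * Real.exp (-(lam * t))) →
      α = astar r) :
    (∀ r, 0 < r →
      (∫ t in Ioi (0 : ℝ), Real.exp (-(r * t)) * Real.exp (-(lam * t))) = 1 / (r + lam)) ∧
    Tendsto astar (nhdsWithin 0 (Ioi 0)) atTop ∧
    Tendsto (fun r => (lam * astar r - Real.log (1 / r) + Real.log (Real.log (1 / r)))
        / Real.log (Real.log (1 / r))) (nhdsWithin 0 (Ioi 0)) (nhds 0) ∧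
    Tendsto (fun r => astar r / ((1 / lam) * Real.log (1 / r)))
      (nhdsWithin 0 (Ioi 0)) (nhds 1) := by
  have hkey : ∀ r, 0 < r →
      lam * Real.exp (-((r + lam) * astar r)) = r * ((r + lam) * astar r - 1) :=
    fun r hr => key_eq lam r (astar r) hlam hr (hsol r hr).2
  have hpart1 : ∀ r, 0 < r →
      (∫ t in Ioi (0 : ℝ), Real.exp (-(r * t)) * Real.exp (-(lam * t))) = 1 / (r + lam) := by
    intro r hr
    have hs : 0 < r + lam := by linarith
    have hptw2 : ∀ t : ℝ, Real.exp (-(r * t)) * Real.exp (-(lam * t))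
        = Real.exp (-((r + lam) * t)) := by
      intro t
      rw [← Real.exp_add, show -(r*t) + -(lam*t) = -((r+lam)*t) by ring]
    simp only [hptw2]
    rw [int_exp_Ioi _ _ hs]
    norm_num
  refine ⟨hpart1, ?_⟩
  set F := nhdsWithin (0:ℝ) (Ioi 0) with hF
  set u : ℝ → ℝ := fun r => (r + lam) * astar r with hu_def
  set L : ℝ → ℝ := fun r => Real.log (1 / r) with hL_def
  -- u r > 1 for r > 0
  have hu1 : ∀ r, 0 < r → 1 < u r := by
    intro r hr
    have h := hkey r hr
    have hpos : 0 < r * ((r + lam) * astar r - 1) := by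
      rw [← h]; positivity
    rcases mul_pos_iff.mp hpos with ⟨_, h2⟩ | ⟨h2, _⟩
    · simp only [hu_def]; linarith
    · linarith
  -- u tends to atTop
  have htu : Tendsto u F atTop := by
    rw [tendsto_atTop]
    intro M
    set M2 := max M 2 with hM2
    have hM2pos : 0 < M2 := lt_of_lt_of_le two_pos (le_max_right _ _)
    have hδ : 0 < lam * Real.exp (-M2) / M2 := by positivity
    have hev : Ioo (0:ℝ) (lam * Real.exp (-M2) / M2) ∈ F :=
      Ioo_mem_nhdsGT_of_mem ⟨le_refl 0, hδ⟩
    filter_upwards [hev] with r hr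
    have hr0 : 0 < r := hr.1
    have h := hkey r hr0
    have h1 := hu1 r hr0
    refine le_trans (le_max_left M 2) ?_
    by_contra hc
    push_neg at hc
    have e1 : Real.exp (-M2) < Real.exp (-(u r)) := Real.exp_lt_exp.2 (by linarith)
    have e2 : r * (u r - 1) < (lam * Real.exp (-M2) / M2) * M2 := by
      have : r * (u r - 1) < (lam * Real.exp (-M2) / M2) * (u r - 1) :=
        mul_lt_mul_of_pos_right hr.2 (by linarith)
      refine this.trans_le ?_
      exact mul_le_mul_of_nonneg_left (by linarith) hδ.le
    rw [div_mul_cancel₀ _ hM2pos.ne'] at e2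
    have : lam * Real.exp (-(u r)) = r * (u r - 1) := by
      simpa [hu_def] using h
    nlinarith
  -- s := r + lam tends to lam
  have hsF : Tendsto (fun r : ℝ => r + lam) F (𝓝 lam) := by
    have : Tendsto (fun r : ℝ => r + lam) (𝓝 0) (𝓝 (0 + lam)) :=
      (continuous_id.add continuous_const).tendsto 0
    simpa using this.mono_left nhdsWithin_le_nhds
  -- part 2 : astar tends to atTop
  have hpart2 : Tendsto astar F atTop := by
    have hinv : Tendsto (fun r : ℝ => (r + lam)⁻¹) F (𝓝 lam⁻¹) := hsF.inv₀ hlam.ne'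
    have := htu.atTop_mul_pos (by positivity : (0:ℝ) < lam⁻¹) hinv
    refine this.congr' ?_
    filter_upwards [self_mem_nhdsWithin] with r hr
    have hs0 : r + lam ≠ 0 := by
      have : (0:ℝ) < r := hr
      positivity
    field_simp [hu_def]
    rfl
  -- L tends to atTop
  have hL : Tendsto L F atTop := by
    have := Real.tendsto_log_atTop.comp tendsto_inv_nhdsGT_zero
    simpa [hL_def, Function.comp_def, one_div] using this
  -- exact log identity
  have hlog : ∀ r, 0 < r → L r = u r + Real.log (u r - 1) - Real.log lam := by
    intro r hr
    have h := hkey r hr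
    have h1 := hu1 r hr
    have hu1' : u r - 1 > 0 := by linarith
    have heq : r * (u r - 1) = lam * Real.exp (-(u r)) := by
      simpa [hu_def] using h.symm
    have hlogeq : Real.log (r * (u r - 1)) = Real.log (lam * Real.exp (-(u r))) := by
      rw [heq]
    rw [Real.log_mul hr.ne' hu1'.ne', Real.log_mul hlam.ne' (Real.exp_pos _).ne',
      Real.log_exp] at hlogeq
    have : L r = -Real.log r := by simp only [hL_def, one_div, Real.log_inv]
    linarith
  -- log x / x → 0
  have t1 : Tendsto (fun x : ℝ => Real.log x / x) atTop (𝓝 0) :=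
    Real.isLittleO_log_id_atTop.tendsto_div_nhds_zero
  -- log(x-1)/x → 0 at atTop
  have t2 : Tendsto (fun x : ℝ => Real.log (x - 1) / x) atTop (𝓝 0) := by
    have ha : Tendsto (fun x : ℝ => x - 1) atTop atTop :=
      tendsto_atTop_add_const_right _ (-1) tendsto_id |>.congr fun x => by
        simp [sub_eq_add_neg]
    have t1' : Tendsto (fun x : ℝ => Real.log (x - 1) / (x - 1)) atTop (𝓝 0) := by
      have := t1.comp ha
      simpa [Function.comp_def] using this
    have t2' : Tendsto (fun x : ℝ => (x - 1) / x) atTop (𝓝 1) := by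
      have : Tendsto (fun x : ℝ => 1 - x⁻¹) atTop (𝓝 (1 - 0)) :=
        tendsto_const_nhds.sub tendsto_inv_atTop_zero
      rw [sub_zero] at this
      refine this.congr' ?_
      filter_upwards [eventually_gt_atTop (0:ℝ)] with x hx
      field_simp
    have := t1'.mul t2'
    rw [zero_mul] at this
    refine this.congr' ?_
    filter_upwards [eventually_gt_atTop (1:ℝ)] with x hx
    have hx0 : x ≠ 0 := by positivity
    have hx1 : x - 1 ≠ 0 := by intro h; rw [sub_eq_zero] at h; simp [h] at hx
    field_simp
  -- log(u r - 1)/(u r) → 0 along F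
  have h2 : Tendsto (fun r => Real.log (u r - 1) / u r) F (𝓝 0) := by
    have := t2.comp htu
    simpa [Function.comp_def] using this
  -- 1/(u r) → 0
  have hinvu : Tendsto (fun r => (u r)⁻¹) F (𝓝 0) := tendsto_inv_atTop_zero.comp htu
  -- L/u → 1
  have h3 : Tendsto (fun r => L r / u r) F (𝓝 1) := by
    have hc : Tendsto (fun r => 1 + Real.log (u r - 1) / u r - Real.log lam * (u r)⁻¹)
        F (𝓝 (1 + 0 - Real.log lam * 0)) :=
      (tendsto_const_nhds.add h2).sub (tendsto_const_nhds.mul hinvu)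
    simp only [mul_zero, add_zero, sub_zero] at hc
    refine hc.congr' ?_
    filter_upwards [self_mem_nhdsWithin] with r hr
    have hr0 : (0:ℝ) < r := hr
    have hu0 : u r ≠ 0 := by have := hu1 r hr0; linarith
    rw [hlog r hr0]
    field_simp
  -- u/L → 1
  have h3' : Tendsto (fun r => u r / L r) F (𝓝 1) := by
    have := h3.inv₀ one_ne_zero
    rw [inv_one] at this
    refine this.congr (fun r => ?_)
    rw [inv_div]
  -- r * L r → 0
  have hrL : Tendsto (fun r => r * L r) F (𝓝 0) := by
    have := t1.comp tendsto_inv_nhdsGT_zero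
    refine this.congr' ?_
    filter_upwards [self_mem_nhdsWithin] with r hr
    have hr0 : (0:ℝ) < r := hr
    simp only [Function.comp_def, hL_def, one_div]
    rw [div_eq_mul_inv, inv_inv, mul_comm]
  -- u r * r → 0
  have huR : Tendsto (fun r => u r * r) F (𝓝 0) := by
    have := h3'.mul hrL
    rw [one_mul] at this
    refine this.congr' ?_
    filter_upwards [hL.eventually (eventually_gt_atTop (1:ℝ))] with r hr
    have hL0 : L r ≠ 0 := by linarith
    field_simp
  -- log L → atTop
  have hlogL : Tendsto (fun r => Real.log (L r)) F atTop := Real.tendsto_log_atTop.comp hL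
  -- (u-1)/L → 1
  have h4 : Tendsto (fun r => (u r - 1) / L r) F (𝓝 1) := by
    have hinvL : Tendsto (fun r => (L r)⁻¹) F (𝓝 0) := tendsto_inv_atTop_zero.comp hL
    have := h3'.sub hinvL
    rw [sub_zero] at this
    refine this.congr (fun r => ?_)
    rw [sub_div]
    rw [one_div]
  -- log((u-1)/L) → 0
  have h5 : Tendsto (fun r => Real.log ((u r - 1) / L r)) F (𝓝 0) := by
    have hc : ContinuousAt Real.log 1 := Real.continuousAt_log one_ne_zero
    have := hc.tendsto.comp h4
    simpa [Real.log_one, Function.comp_def] using this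
  -- third limit
  have hpart3 : Tendsto (fun r => (lam * astar r - L r + Real.log (L r)) / Real.log (L r))
      F (𝓝 0) := by
    have hA : Tendsto (fun r => Real.log lam / Real.log (L r)) F (𝓝 0) :=
      tendsto_const_nhds.div_atTop hlogL
    have hB : Tendsto (fun r => Real.log ((u r - 1) / L r) / Real.log (L r)) F (𝓝 0) :=
      h5.div_atTop hlogL
    have hC0 : Tendsto (fun r => u r * r / (r + lam)) F (𝓝 0) := by
      have := huR.div hsF hlam.ne'
      rw [zero_div] at this
      exact this
    have hC : Tendsto (fun r => (u r * r / (r + lam)) / Real.log (L r)) F (𝓝 0) :=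
      hC0.div_atTop hlogL
    have := (hA.sub hB).sub hC
    simp only [sub_zero, zero_sub, neg_zero] at this
    refine this.congr' ?_
    filter_upwards [self_mem_nhdsWithin, hL.eventually (eventually_gt_atTop (1:ℝ))]
      with r hr hLr
    have hr0 : (0:ℝ) < r := hr
    have hu1' : 0 < u r - 1 := by have := hu1 r hr0; linarith
    have hL0 : L r ≠ 0 := by linarith
    have hs0 : r + lam ≠ 0 := by positivity
    have hnum : lam * astar r - L r + Real.log (L r)
        = Real.log lam - Real.log ((u r - 1) / L r) - u r * r / (r + lam) := by
      rw [Real.log_div hu1'.ne' hL0, hlog r hr0]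
      have hastar : lam * astar r = u r - u r * r / (r + lam) := by
        rw [hu_def]
        field_simp
        ring
      rw [hastar]
      ring
    rw [hnum]
    ring
  -- fourth limit
  have hpart4 : Tendsto (fun r => astar r / ((1 / lam) * L r)) F (𝓝 1) := by
    have hq : Tendsto (fun r : ℝ => lam / (r + lam)) F (𝓝 1) := by
      have h0 : Tendsto (fun r : ℝ => lam / (r + lam)) F (𝓝 (lam / lam)) :=
        Tendsto.div (tendsto_const_nhds (x := lam)) hsF hlam.ne'
      rwa [div_self hlam.ne'] at h0
    have := h3'.mul hq
    rw [one_mul] at this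
    refine this.congr' ?_
    filter_upwards [self_mem_nhdsWithin, hL.eventually (eventually_gt_atTop (1:ℝ))]
      with r hr hLr
    have hr0 : (0:ℝ) < r := hr
    have hL0 : L r ≠ 0 := by linarith
    have hs0 : r + lam ≠ 0 := by positivity
    rw [hu_def]
    field_simp
  exact ⟨hpart2, hpart3, hpart4⟩
end

section
/- Let r>0 and p a decreasing survival function; for the loaded cash-refund problem with δ=π/(1+π)∈(0,1), define at the viable price â* the function M(r,α) = α + F(α;r) − G(α;r). Then â* satisfies (1−δ)â* = M(r, â*), r·â*(r) → 1+π as r→∞ (for fixed exponential or any p with p(t)→0), and â*(r) → ∞ as r ↓ r_δ, where r_δ is the unique rate with δ = r_δ·a_x(r_δ). -/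
open MeasureTheory Set Filter Topology

lemma lcria_exp_Ioi {r : ℝ} (hr : 0 < r) (a : ℝ) :
    ∫ t in Ioi a, Real.exp (-(r * t)) = Real.exp (-(r * a)) / r := by
  have := integral_comp_mul_left_Ioi (fun x => Real.exp (-x)) a hr
  simp only [smul_eq_mul] at this
  rw [show (fun t => Real.exp (-(r*t))) = (fun t => Real.exp (-(r*t))) from rfl]
  calc ∫ t in Ioi a, Real.exp (-(r * t)) = r⁻¹ * ∫ x in Ioi (r*a), Real.exp (-x) := this
    _ = Real.exp (-(r * a)) / r := by rw [integral_exp_neg_Ioi]; ring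

lemma lcria_exp_intOn {r : ℝ} (hr : 0 < r) (a : ℝ) :
    IntegrableOn (fun t : ℝ => Real.exp (-(r * t))) (Ioi a) := by
  simpa [neg_mul] using exp_neg_integrableOn_Ioi a hr

lemma lcria_I2 {r : ℝ} (hr : 0 < r) (a : ℝ) :
    ∫ t in (0:ℝ)..a, Real.exp (-(r * t)) * (a - t)
      = (r * a - 1 + Real.exp (-(r * a))) / r ^ 2 := by
  have hD : ∀ t : ℝ, HasDerivAt (fun t => Real.exp (-(r*t)) * ((t-a)/r + 1/r^2))
      (Real.exp (-(r*t)) * (a - t)) t := by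
    intro t
    have h1 : HasDerivAt (fun t : ℝ => Real.exp (-(r*t))) (-r * Real.exp (-(r*t))) t := by
      have := ((hasDerivAt_id t).const_mul r).neg.exp
      simpa [mul_comm] using this
    have h2 : HasDerivAt (fun t : ℝ => (t-a)/r + 1/r^2) (1/r) t := by
      have h := (((hasDerivAt_id t).sub_const a).div_const r).add_const (1/r^2)
      simp only [id_eq] at h
      convert h using 1
      try rw [one_div]
    have := h1.mul h2
    refine this.congr_deriv ?_
    have hr' : r ≠ 0 := ne_of_gt hr
    field_simp
    ring
  have hr' : r ≠ 0 := ne_of_gt hr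
  rw [intervalIntegral.integral_eq_sub_of_hasDerivAt (fun t _ => hD t)]
  · field_simp
    simp only [mul_zero, neg_zero, Real.exp_zero]
    ring
  · apply ContinuousOn.intervalIntegrable
    exact (Real.continuous_exp.comp (by continuity)).continuousOn.mul
      (by fun_prop)

lemma lcria_hD1 (r t : ℝ) :
    HasDerivAt (fun t : ℝ => Real.exp (-(r*t))) (-r * Real.exp (-(r*t))) t := by
  have := ((hasDerivAt_id t).const_mul r).neg.exp
  simpa [mul_comm] using this

lemma lcria_I1 {r : ℝ} (hr : 0 < r) (c d : ℝ) :
    ∫ t in c..d, Real.exp (-(r * t))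
      = (Real.exp (-(r * c)) - Real.exp (-(r * d))) / r := by
  have hD : ∀ t : ℝ, HasDerivAt (fun t : ℝ => Real.exp (-(r*t)) / (-r))
      (Real.exp (-(r*t))) t := by
    intro t
    have := (lcria_hD1 r t).div_const (-r)
    refine this.congr_deriv ?_
    field_simp
  have hr' : r ≠ 0 := ne_of_gt hr
  rw [intervalIntegral.integral_eq_sub_of_hasDerivAt (fun t _ => hD t)]
  · rw [div_sub_div_same, div_eq_div_iff (by simpa using hr') hr']
    ring
  · apply ContinuousOn.intervalIntegrable
    exact (Real.continuous_exp.comp (by continuity)).continuousOn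

section Helpers
variable {p : ℝ → ℝ} {r a : ℝ}

lemma lcria_ii (hcont : ContinuousOn p (Ici 0)) {c d : ℝ} (hc : 0 ≤ c) (hcd : c ≤ d)
    (f : ℝ → ℝ) (hf : Continuous f) :
    IntervalIntegrable (fun t => f t * p t) volume c d := by
  apply ContinuousOn.intervalIntegrable
  rw [uIcc_of_le hcd]
  exact hf.continuousOn.mul (hcont.mono (fun x hx => le_trans hc hx.1))

lemma lcria_UG (hcont : ContinuousOn p (Ici 0)) (hle : ∀ t, 0 ≤ t → p t ≤ 1)
    (hr : 0 < r) (ha : 0 ≤ a) :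
    ∫ t in (0:ℝ)..a, Real.exp (-(r * t)) * (a - t) * p t
      ≤ (r * a - 1 + Real.exp (-(r * a))) / r ^ 2 := by
  rw [← lcria_I2 hr a]
  apply intervalIntegral.integral_mono_on ha
    (lcria_ii hcont le_rfl ha _ (by continuity))
    (by apply ContinuousOn.intervalIntegrable; exact (by fun_prop : Continuous fun t => Real.exp (-(r*t)) * (a - t)).continuousOn)
  intro t ht
  have h1 : 0 ≤ Real.exp (-(r * t)) * (a - t) :=
    mul_nonneg (Real.exp_nonneg _) (by linarith [ht.2])
  exact mul_le_of_le_one_right h1 (hle t ht.1)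

lemma lcria_LG_full (hcont : ContinuousOn p (Ici 0)) (hanti : AntitoneOn p (Ici 0))
    (hpos : ∀ t, 0 ≤ t → 0 < p t) (hr : 0 < r) (ha : 0 ≤ a) :
    p a * ((r * a - 1 + Real.exp (-(r * a))) / r ^ 2)
      ≤ ∫ t in (0:ℝ)..a, Real.exp (-(r * t)) * (a - t) * p t := by
  have := lcria_I2 hr a
  have hmono : ∀ t ∈ Icc (0:ℝ) a,
      Real.exp (-(r * t)) * (a - t) * p a ≤ Real.exp (-(r * t)) * (a - t) * p t := by
    intro t ht
    have h1 : 0 ≤ Real.exp (-(r * t)) * (a - t) :=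
      mul_nonneg (Real.exp_nonneg _) (by linarith [ht.2])
    exact mul_le_mul_of_nonneg_left (hanti ht.1 ha ht.2) h1
  calc p a * ((r * a - 1 + Real.exp (-(r * a))) / r ^ 2)
      = ∫ t in (0:ℝ)..a, Real.exp (-(r * t)) * (a - t) * p a := by
        rw [intervalIntegral.integral_mul_const, lcria_I2 hr a]; ring
    _ ≤ ∫ t in (0:ℝ)..a, Real.exp (-(r * t)) * (a - t) * p t := by
        apply intervalIntegral.integral_mono_on ha _ (lcria_ii hcont le_rfl ha _ (by continuity)) hmono
        apply ContinuousOn.intervalIntegrable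
        exact ((by fun_prop : Continuous fun t => Real.exp (-(r*t)) * (a - t) * p a)).continuousOn

end Helpers

section Helpers2
variable {p : ℝ → ℝ} {r a : ℝ}

lemma lcria_LG_cut (hcont : ContinuousOn p (Ici 0)) (hanti : AntitoneOn p (Ici 0))
    (hpos : ∀ t, 0 ≤ t → 0 < p t) (hr : 0 < r) {c : ℝ} (hc : 0 ≤ c) (hca : c ≤ a) :
    p c * (a - c) * ((1 - Real.exp (-(r * c))) / r)
      ≤ ∫ t in (0:ℝ)..a, Real.exp (-(r * t)) * (a - t) * p t := by
  have ha : (0:ℝ) ≤ a := le_trans hc hca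
  have hsplit : (∫ t in (0:ℝ)..c, Real.exp (-(r * t)) * (a - t) * p t)
      + (∫ t in c..a, Real.exp (-(r * t)) * (a - t) * p t)
      = ∫ t in (0:ℝ)..a, Real.exp (-(r * t)) * (a - t) * p t :=
    intervalIntegral.integral_add_adjacent_intervals
      (lcria_ii hcont le_rfl hc _ (by continuity))
      (lcria_ii hcont hc hca _ (by continuity))
  have h2 : 0 ≤ ∫ t in c..a, Real.exp (-(r * t)) * (a - t) * p t := by
    apply intervalIntegral.integral_nonneg hca
    intro t ht
    exact mul_nonneg (mul_nonneg (Real.exp_nonneg _) (by linarith [ht.2]))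
      (hpos t (le_trans hc ht.1)).le
  have h1 : p c * (a - c) * ((1 - Real.exp (-(r * c))) / r)
      ≤ ∫ t in (0:ℝ)..c, Real.exp (-(r * t)) * (a - t) * p t := by
    calc p c * (a - c) * ((1 - Real.exp (-(r * c))) / r)
        = ∫ t in (0:ℝ)..c, Real.exp (-(r * t)) * ((a - c) * p c) := by
          rw [intervalIntegral.integral_mul_const, lcria_I1 hr 0 c]
          simp [mul_zero]
          ring
      _ ≤ ∫ t in (0:ℝ)..c, Real.exp (-(r * t)) * (a - t) * p t := by
          apply intervalIntegral.integral_mono_on hc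
            (by apply ContinuousOn.intervalIntegrable; fun_prop)
            (lcria_ii hcont le_rfl hc _ (by continuity))
          intro t ht
          have hpt : p c ≤ p t := hanti ht.1 hc ht.2
          have hpc : 0 ≤ p c := (hpos c hc).le
          have : (a - c) * p c ≤ (a - t) * p t := by
            apply mul_le_mul (by linarith [ht.2]) hpt hpc (by linarith [ht.2, hca])
          calc Real.exp (-(r * t)) * ((a - c) * p c)
              ≤ Real.exp (-(r * t)) * ((a - t) * p t) :=
                mul_le_mul_of_nonneg_left this (Real.exp_nonneg _)
            _ = Real.exp (-(r * t)) * (a - t) * p t := by ring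
  linarith

lemma lcria_UG_total (hcont : ContinuousOn p (Ici 0)) (hpos : ∀ t, 0 ≤ t → 0 < p t)
    (hint : IntegrableOn (fun t => Real.exp (-(r * t)) * p t) (Ioi 0)) (ha : 0 ≤ a) :
    ∫ t in (0:ℝ)..a, Real.exp (-(r * t)) * (a - t) * p t
      ≤ a * ∫ t in Ioi (0:ℝ), Real.exp (-(r * t)) * p t := by
  have step1 : ∫ t in (0:ℝ)..a, Real.exp (-(r * t)) * (a - t) * p t
      ≤ ∫ t in (0:ℝ)..a, a * (Real.exp (-(r * t)) * p t) := by
    apply intervalIntegral.integral_mono_on ha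
      (lcria_ii hcont le_rfl ha _ (by continuity))
      (by
        have := (lcria_ii hcont le_rfl ha (fun t => Real.exp (-(r*t))) (by continuity)).const_mul a
        simpa [mul_assoc] using this)
    intro t ht
    have hp' : 0 ≤ p t := (hpos t ht.1).le
    have : (a - t) * p t ≤ a * p t := mul_le_mul_of_nonneg_right (by linarith [ht.1]) hp'
    calc Real.exp (-(r * t)) * (a - t) * p t
        = Real.exp (-(r * t)) * ((a - t) * p t) := by ring
      _ ≤ Real.exp (-(r * t)) * (a * p t) := mul_le_mul_of_nonneg_left this (Real.exp_nonneg _)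
      _ = a * (Real.exp (-(r * t)) * p t) := by ring
  have step2 : ∫ t in (0:ℝ)..a, a * (Real.exp (-(r * t)) * p t)
      = a * ∫ t in Ioc (0:ℝ) a, Real.exp (-(r * t)) * p t := by
    rw [intervalIntegral.integral_const_mul, intervalIntegral.integral_of_le ha]
  have step3 : ∫ t in Ioc (0:ℝ) a, Real.exp (-(r * t)) * p t
      ≤ ∫ t in Ioi (0:ℝ), Real.exp (-(r * t)) * p t := by
    apply setIntegral_mono_set hint
    · filter_upwards [ae_restrict_mem measurableSet_Ioi] with t ht
      exact mul_nonneg (Real.exp_nonneg _) (hpos t (le_of_lt ht)).le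
    · exact HasSubset.Subset.eventuallyLE Ioc_subset_Ioi_self
  calc ∫ t in (0:ℝ)..a, Real.exp (-(r * t)) * (a - t) * p t
      ≤ a * ∫ t in Ioc (0:ℝ) a, Real.exp (-(r * t)) * p t := by rw [← step2]; exact step1
    _ ≤ a * ∫ t in Ioi (0:ℝ), Real.exp (-(r * t)) * p t := mul_le_mul_of_nonneg_left step3 ha

end Helpers2

section Helpers3
variable {p : ℝ → ℝ} {r a : ℝ}

lemma lcria_intF (hint : IntegrableOn (fun t => Real.exp (-(r * t)) * p t) (Ioi 0))
    (ha : 0 ≤ a) : IntegrableOn (fun t => Real.exp (-(r * t)) * p t) (Ioi a) :=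
  hint.mono_set (Ioi_subset_Ioi ha)

lemma lcria_F_nonneg (hpos : ∀ t, 0 ≤ t → 0 < p t) (ha : 0 ≤ a) :
    0 ≤ ∫ t in Ioi a, Real.exp (-(r * t)) * p t := by
  apply setIntegral_nonneg measurableSet_Ioi
  intro t ht
  exact mul_nonneg (Real.exp_nonneg _) (hpos t (le_trans ha (le_of_lt ht))).le

lemma lcria_UF (hpos : ∀ t, 0 ≤ t → 0 < p t) (hle : ∀ t, 0 ≤ t → p t ≤ 1)
    (hint : IntegrableOn (fun t => Real.exp (-(r * t)) * p t) (Ioi 0))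
    (hr : 0 < r) (ha : 0 ≤ a) :
    ∫ t in Ioi a, Real.exp (-(r * t)) * p t ≤ Real.exp (-(r * a)) / r := by
  rw [← lcria_exp_Ioi hr a]
  apply setIntegral_mono_on (lcria_intF hint ha) (lcria_exp_intOn hr a) measurableSet_Ioi
  intro t ht
  have ht0 : 0 ≤ t := le_trans ha (le_of_lt ht)
  exact mul_le_of_le_one_right (Real.exp_nonneg _) (hle t ht0)

lemma lcria_LF (hcont : ContinuousOn p (Ici 0)) (hanti : AntitoneOn p (Ici 0))
    (hpos : ∀ t, 0 ≤ t → 0 < p t)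
    (hint : IntegrableOn (fun t => Real.exp (-(r * t)) * p t) (Ioi 0))
    (hr : 0 < r) (ha : 0 ≤ a) {m : ℝ} (hm : 0 ≤ m) :
    p (a + m) * ((Real.exp (-(r * a)) - Real.exp (-(r * (a + m)))) / r)
      ≤ ∫ t in Ioi a, Real.exp (-(r * t)) * p t := by
  have ham : a ≤ a + m := by linarith
  have step1 : ∫ t in Ioc a (a + m), Real.exp (-(r * t)) * p t
      ≤ ∫ t in Ioi a, Real.exp (-(r * t)) * p t := by
    apply setIntegral_mono_set (lcria_intF hint ha)
    · filter_upwards [ae_restrict_mem measurableSet_Ioi] with t ht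
      exact mul_nonneg (Real.exp_nonneg _) (hpos t (le_trans ha (le_of_lt ht))).le
    · exact HasSubset.Subset.eventuallyLE Ioc_subset_Ioi_self
  have step2 : p (a + m) * ((Real.exp (-(r * a)) - Real.exp (-(r * (a + m)))) / r)
      ≤ ∫ t in Ioc a (a + m), Real.exp (-(r * t)) * p t := by
    rw [← intervalIntegral.integral_of_le ham]
    calc p (a + m) * ((Real.exp (-(r * a)) - Real.exp (-(r * (a + m)))) / r)
        = ∫ t in a..(a + m), Real.exp (-(r * t)) * p (a + m) := by
          rw [intervalIntegral.integral_mul_const, lcria_I1 hr a (a + m)]; ring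
      _ ≤ ∫ t in a..(a + m), Real.exp (-(r * t)) * p t := by
          apply intervalIntegral.integral_mono_on ham
            (by apply ContinuousOn.intervalIntegrable; fun_prop)
            (lcria_ii hcont ha ham _ (by continuity))
          intro t ht
          have ht0 : 0 ≤ t := le_trans ha ht.1
          exact mul_le_mul_of_nonneg_left (hanti (mem_Ici.mpr ht0) (mem_Ici.mpr (by linarith : (0:ℝ) ≤ a + m)) ht.2) (Real.exp_nonneg _)
  linarith

end Helpers3

section Helpers4
variable {p : ℝ → ℝ}

lemma lcria_p_one (hcont : ContinuousOn p (Ici 0)) (hp0 : p 0 = 1) {c : ℝ} (hc : 0 < c) :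
    Tendsto (fun r : ℝ => p (c / r)) atTop (𝓝 1) := by
  have h0 : Tendsto p (𝓝[Ici 0] 0) (𝓝 1) := by
    have := hcont 0 (mem_Ici.mpr le_rfl)
    rwa [ContinuousWithinAt, hp0] at this
  apply h0.comp
  rw [tendsto_nhdsWithin_iff]
  constructor
  · show Tendsto (fun r : ℝ => c / r) atTop (𝓝 0)
    simpa [div_eq_mul_inv] using tendsto_inv_atTop_zero.const_mul c
  · filter_upwards [eventually_gt_atTop (0:ℝ)] with r hr
    exact mem_Ici.mpr (div_nonneg hc.le hr.le)

lemma lcria_subst (hcont : ContinuousOn p (Ici 0)) {r : ℝ} (hr : 0 < r) :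
    ∫ s in Ioi (0:ℝ), Real.exp (-s) * p (s / r)
      = r * ∫ t in Ioi (0:ℝ), Real.exp (-(r * t)) * p t := by
  have := integral_comp_mul_left_Ioi (fun s => Real.exp (-s) * p (s / r)) 0 hr
  simp only [mul_zero, smul_eq_mul] at this
  have heq : (fun x : ℝ => Real.exp (-(r * x)) * p (r * x / r))
      = fun x : ℝ => Real.exp (-(r * x)) * p x := by
    funext x
    rw [mul_div_cancel_left₀ _ (ne_of_gt hr)]
  rw [heq] at this
  rw [this]
  field_simp

lemma lcria_subst_int (hcont : ContinuousOn p (Ici 0))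
    (hint : ∀ r : ℝ, 0 < r → IntegrableOn (fun t => Real.exp (-(r * t)) * p t) (Ioi 0))
    {r : ℝ} (hr : 0 < r) :
    IntegrableOn (fun s : ℝ => Real.exp (-s) * p (s / r)) (Ioi (0:ℝ)) := by
  have heq : (fun x : ℝ => Real.exp (-(r * x)) * p (r * x / r))
      = fun x : ℝ => Real.exp (-(r * x)) * p x := by
    funext x
    rw [mul_div_cancel_left₀ _ (ne_of_gt hr)]
  have h2 : IntegrableOn (fun x : ℝ => Real.exp (-(r * x)) * p (r * x / r)) (Ioi 0) := by
    rw [heq]; exact hint r hr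
  have := (integrableOn_Ioi_comp_mul_left_iff (fun s => Real.exp (-s) * p (s / r)) 0 hr).mp
    (by simpa [neg_mul] using h2)
  simpa using this

end Helpers4

section Helpers5
variable {p : ℝ → ℝ}

lemma lcria_exists_drop (hanti : AntitoneOn p (Ici 0)) (hpos : ∀ t, 0 ≤ t → 0 < p t)
    (hlim : Tendsto p atTop (𝓝 0)) {q : ℝ} (hq : 1 < q) :
    ∃ t : ℝ, 0 < t ∧ p (q * t) < p t := by
  by_contra hcon
  push_neg at hcon
  have heq : ∀ t : ℝ, 0 < t → p (q * t) = p t := by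
    intro t ht
    have h1 : p (q * t) ≤ p t := by
      apply hanti (mem_Ici.mpr ht.le) (mem_Ici.mpr (by nlinarith))
      nlinarith
    exact le_antisymm h1 (hcon t ht)
  have key : ∀ n : ℕ, p (q ^ n) = p 1 := by
    intro n
    induction n with
    | zero => simp
    | succ n ih =>
      rw [pow_succ, mul_comm, heq _ (pow_pos (by linarith) n), ih]
  have htend : Tendsto (fun n : ℕ => p (q ^ n)) atTop (𝓝 0) :=
    hlim.comp (tendsto_pow_atTop_atTop_of_one_lt hq)
  rw [show (fun n : ℕ => p (q ^ n)) = fun _ => p 1 from funext key] at htend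
  have := tendsto_nhds_unique htend tendsto_const_nhds
  exact absurd this (ne_of_gt (hpos 1 zero_le_one)).symm

lemma lcria_strict (hcont : ContinuousOn p (Ici 0)) (hanti : AntitoneOn p (Ici 0))
    (hpos : ∀ t, 0 ≤ t → 0 < p t) (hlim : Tendsto p atTop (𝓝 0))
    (hint : ∀ r : ℝ, 0 < r → IntegrableOn (fun t => Real.exp (-(r * t)) * p t) (Ioi 0))
    {r1 r2 : ℝ} (h1 : 0 < r1) (h12 : r1 < r2) :
    ∫ s in Ioi (0:ℝ), Real.exp (-s) * p (s / r1)
      < ∫ s in Ioi (0:ℝ), Real.exp (-s) * p (s / r2) := by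
  have h2 : 0 < r2 := lt_trans h1 h12
  set f : ℝ → ℝ := fun s => Real.exp (-s) * p (s / r1) with hf
  set g : ℝ → ℝ := fun s => Real.exp (-s) * p (s / r2) with hg
  have intf : IntegrableOn f (Ioi 0) := lcria_subst_int hcont hint h1
  have intg : IntegrableOn g (Ioi 0) := lcria_subst_int hcont hint h2
  have hfg : ∀ s : ℝ, 0 < s → f s ≤ g s := by
    intro s hs
    apply mul_le_mul_of_nonneg_left _ (Real.exp_nonneg _)
    apply hanti (mem_Ici.mpr (by positivity)) (mem_Ici.mpr (by positivity))
    exact div_le_div_of_nonneg_left hs.le h1 h12.le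
  -- a point of strict inequality
  obtain ⟨t, ht, hdrop⟩ := lcria_exists_drop hanti hpos hlim
    (show 1 < r2 / r1 from (one_lt_div h1).mpr h12)
  set s0 : ℝ := r2 * t with hs0
  have hs0pos : 0 < s0 := mul_pos h2 ht
  have hfgs0 : f s0 < g s0 := by
    have e1 : s0 / r2 = t := by rw [hs0]; field_simp
    have e2 : s0 / r1 = r2 / r1 * t := by rw [hs0]; field_simp
    rw [hf, hg]
    simp only [e1, e2]
    exact mul_lt_mul_of_pos_left hdrop (Real.exp_pos _)
  -- the difference has positive integral
  set h : ℝ → ℝ := fun s => g s - f s with hh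
  have hint_h : IntegrableOn h (Ioi 0) := intg.sub intf
  have hnonneg : 0 ≤ᵐ[volume.restrict (Ioi (0:ℝ))] h := by
    rw [EventuallyLE, ae_restrict_iff' measurableSet_Ioi]
    filter_upwards with s hs
    simpa [hh] using hfg s hs
  have hcontAt : ContinuousAt h s0 := by
    have c1 : ContinuousAt (fun s : ℝ => p (s / r1)) s0 := by
      have : ContinuousAt p (s0 / r1) :=
        (hcont.continuousAt (Ici_mem_nhds (by positivity)))
      have cdiv : ContinuousAt (fun s : ℝ => s / r1) s0 := continuousAt_id.div_const r1
      exact ContinuousAt.comp (g := p) (f := fun s : ℝ => s / r1) this cdiv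
    have c2 : ContinuousAt (fun s : ℝ => p (s / r2)) s0 := by
      have : ContinuousAt p (s0 / r2) :=
        (hcont.continuousAt (Ici_mem_nhds (by positivity)))
      have cdiv : ContinuousAt (fun s : ℝ => s / r2) s0 := continuousAt_id.div_const r2
      exact ContinuousAt.comp (g := p) (f := fun s : ℝ => s / r2) this cdiv
    have ce : ContinuousAt (fun s : ℝ => Real.exp (-s)) s0 := by fun_prop
    exact (ce.mul c2).sub (ce.mul c1)
  have hpos_nbhd : {s : ℝ | 0 < h s} ∩ Ioi 0 ∈ 𝓝 s0 := by
    apply inter_mem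
    · exact hcontAt.eventually (eventually_gt_nhds (by simpa [hh] using sub_pos.mpr hfgs0))
    · exact Ioi_mem_nhds hs0pos
  have hmeaspos : 0 < volume (Function.support h ∩ Ioi 0) := by
    have hsub : {s : ℝ | 0 < h s} ∩ Ioi 0 ⊆ Function.support h ∩ Ioi 0 := by
      intro s hs
      exact ⟨ne_of_gt hs.1, hs.2⟩
    exact lt_of_lt_of_le (Measure.measure_pos_of_mem_nhds volume hpos_nbhd) (measure_mono hsub)
  have hposint : 0 < ∫ s in Ioi (0:ℝ), h s :=
    (setIntegral_pos_iff_support_of_nonneg_ae hnonneg hint_h).mpr hmeaspos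
  have := integral_sub intg intf
  have hdiff : ∫ s in Ioi (0:ℝ), h s
      = (∫ s in Ioi (0:ℝ), g s) - ∫ s in Ioi (0:ℝ), f s := this
  linarith

end Helpers5

section Helpers6
variable {p : ℝ → ℝ}

lemma lcria_rho_cont (hpos : ∀ t, 0 ≤ t → 0 < p t)
    (hint : ∀ r : ℝ, 0 < r → IntegrableOn (fun t => Real.exp (-(r * t)) * p t) (Ioi 0))
    {rδ : ℝ} (hrδpos : 0 < rδ) :
    Tendsto (fun r : ℝ => ∫ t in Ioi (0:ℝ), Real.exp (-(r * t)) * p t)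
      (𝓝[>] rδ) (𝓝 (∫ t in Ioi (0:ℝ), Real.exp (-(rδ * t)) * p t)) := by
  apply tendsto_integral_filter_of_dominated_convergence
    (fun t => Real.exp (-(rδ * t)) * p t)
  · filter_upwards [self_mem_nhdsWithin] with r hr
    exact (hint r (lt_trans hrδpos hr)).aestronglyMeasurable
  · filter_upwards [self_mem_nhdsWithin] with r hr
    rw [ae_restrict_iff' measurableSet_Ioi]
    filter_upwards with t ht
    have ht0 : (0:ℝ) ≤ t := (le_of_lt ht)
    have hpt : 0 ≤ p t := (hpos t ht0).le
    rw [Real.norm_eq_abs, abs_of_nonneg (mul_nonneg (Real.exp_nonneg _) hpt)]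
    apply mul_le_mul_of_nonneg_right _ hpt
    apply Real.exp_le_exp.mpr
    have : rδ * t ≤ r * t := mul_le_mul_of_nonneg_right (le_of_lt hr) ht0
    linarith
  · exact hint rδ hrδpos
  · filter_upwards with t
    have : Continuous (fun r : ℝ => Real.exp (-(r * t)) * p t) := by fun_prop
    exact (this.tendsto rδ).mono_left nhdsWithin_le_nhds

end Helpers6

lemma lcria_arith1 {x C : ℝ} (hx : 0 < x) (hC : 0 < C) : x / (4 * (C + 1)) * C ≤ x / 4 := by
  rw [div_mul_eq_mul_div, div_le_div_iff₀ (by positivity) (by norm_num)]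
  nlinarith

lemma lcria_sq {x q : ℝ} (hx0 : 0 ≤ x) (hx1 : x ≤ 1) (hq : 1 - x / 4 ≤ q) :
    1 - x / 2 ≤ q * (1 - x / 4) := by nlinarith [sq_nonneg (x / 4)]

lemma lcria_mul_le_one {q x : ℝ} (hq1 : q ≤ 1) (hq0 : 0 ≤ q) (hx0 : 0 ≤ x) (hx1 : x ≤ 1) :
    q * (1 - x / 4) ≤ 1 := by nlinarith

lemma lcria_ebq {eb s : ℝ} (heb0 : 0 ≤ eb) (heb1 : eb ≤ 1) (hs : s ≤ 1) :
    eb * (1 - s) ≤ 1 - s := by nlinarith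

set_option maxHeartbeats 1000000

theorem loaded_cria_price_characterization_and_asymptotics
    (π δ : ℝ) (hπ : 0 < π) (hδ : δ = π / (1 + π))
    (p : ℝ → ℝ)
    (hanti : AntitoneOn p (Ici 0))
    (hcont : ContinuousOn p (Ici 0))
    (hpos : ∀ t, 0 ≤ t → 0 < p t) (hle : ∀ t, 0 ≤ t → p t ≤ 1)
    (hp0 : p 0 = 1)
    (hlim : Tendsto p atTop (nhds 0))
    (hint : ∀ r : ℝ, 0 < r → IntegrableOn (fun t => Real.exp (-(r * t)) * p t) (Ioi 0))
    (rδ : ℝ) (hrδpos : 0 < rδ)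
    (hrδ : δ = rδ * ∫ t in Ioi (0 : ℝ), Real.exp (-(rδ * t)) * p t)
    (ahat : ℝ → ℝ)
    (hsol : ∀ r, rδ < r → 0 < ahat r ∧
      δ * ahat r + (∫ t in Ioi (ahat r), Real.exp (-(r * t)) * p t) =
        r * ∫ t in (0 : ℝ)..(ahat r), Real.exp (-(r * t)) * (ahat r - t) * p t) :
    (∀ r, 0 < r → δ = r * (∫ t in Ioi (0 : ℝ), Real.exp (-(r * t)) * p t) → r = rδ) ∧
    (∀ r, rδ < r →
      (1 - δ) * ahat r =
        ahat r + (∫ t in Ioi (ahat r), Real.exp (-(r * t)) * p t)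
          - r * ∫ t in (0 : ℝ)..(ahat r), Real.exp (-(r * t)) * (ahat r - t) * p t) ∧
    Tendsto (fun r => r * ahat r) atTop (nhds (1 + π)) ∧
    Tendsto ahat (nhdsWithin rδ (Ioi rδ)) atTop := by
  have hδ0 : 0 < δ := by rw [hδ]; positivity
  have hδ1 : δ < 1 := by
    rw [hδ, div_lt_one (by linarith)]; linarith
  refine ⟨?_, ?_, ?_, ?_⟩
  · -- Part 1: uniqueness of the threshold rate
    intro r hr hre
    by_contra hne
    rcases lt_or_gt_of_ne hne with h | h
    · have hs := lcria_strict hcont hanti hpos hlim hint hr h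
      rw [lcria_subst hcont hr, lcria_subst hcont hrδpos] at hs
      rw [← hre, ← hrδ] at hs
      exact lt_irrefl δ hs
    · have hs := lcria_strict hcont hanti hpos hlim hint hrδpos h
      rw [lcria_subst hcont hrδpos, lcria_subst hcont hr] at hs
      rw [← hre, ← hrδ] at hs
      exact lt_irrefl δ hs
  · -- Part 2: the price equation
    intro r hr
    have := (hsol r hr).2
    linarith
  · -- Part 3: large-r asymptotics
    have h1π : (0:ℝ) < 1 + π := by linarith
    have h1δ : 1 - δ = 1 / (1 + π) := by rw [hδ]; field_simp; ring
    set τ : ℝ := (1 + δ) / 2 with hτ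
    have hτδ : δ < τ := by rw [hτ]; linarith
    have hτ1 : τ < 1 := by rw [hτ]; linarith
    set K : ℝ := Real.log (4 / (1 - δ)) with hK
    have hKexp : Real.exp (-K) = (1 - δ) / 4 := by
      rw [hK, Real.exp_neg, Real.exp_log (div_pos (by norm_num) (by linarith)), inv_div]
    have hKpos : 0 < K := by
      rw [hK]
      apply Real.log_pos
      rw [lt_div_iff₀ (by linarith)]
      linarith
    set θ : ℝ := 2 * (1 + δ) / (3 + δ) with hθ
    have hθ1 : θ < 1 := by rw [hθ, div_lt_one (by linarith)]; linarith
    set C : ℝ := max K ((1 + τ * K) / (τ - δ)) with hC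
    have hCK : K ≤ C := le_max_left _ _
    have hCpos : 0 < C := lt_of_lt_of_le hKpos hCK
    have hbd : ∀ᶠ r : ℝ in atTop, rδ < r ∧ 0 < ahat r ∧ r * ahat r ≤ C := by
      filter_upwards [eventually_gt_atTop rδ, eventually_gt_atTop (0:ℝ),
        (lcria_p_one hcont hp0 hKpos).eventually (eventually_ge_nhds hθ1)] with r hr hr0 hpK
      obtain ⟨ha, heq⟩ := hsol r hr
      refine ⟨hr, ha, ?_⟩
      by_cases hcase : r * ahat r ≤ K
      · linarith
      push_neg at hcase
      set a : ℝ := ahat r with haa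
      have hca : K / r ≤ a := by
        rw [div_le_iff₀ hr0, mul_comm]
        exact le_of_lt hcase
      have hc0 : 0 < K / r := by positivity
      have hLG := lcria_LG_cut hcont hanti hpos hr0 hc0.le hca
      rw [show r * (K / r) = K by field_simp, hKexp] at hLG
      have hF0 : 0 ≤ ∫ t in Ioi a, Real.exp (-(r * t)) * p t := lcria_F_nonneg hpos ha.le
      have hFu : (∫ t in Ioi a, Real.exp (-(r * t)) * p t) ≤ 1 / r := by
        have h := lcria_UF hpos hle (hint r hr0) hr0 ha.le
        have he1 : Real.exp (-(r * a)) ≤ 1 := by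
          rw [show (1:ℝ) = Real.exp 0 by rw [Real.exp_zero]]
          exact Real.exp_le_exp.mpr (neg_nonpos.mpr (by positivity))
        calc (∫ t in Ioi a, Real.exp (-(r * t)) * p t) ≤ Real.exp (-(r * a)) / r := h
          _ ≤ 1 / r := by gcongr
      have h3δ : (3:ℝ) + δ ≠ 0 := by linarith
      have hG2 : τ * (a - K / r)
          ≤ r * ∫ t in (0:ℝ)..a, Real.exp (-(r * t)) * (a - t) * p t := by
        have hmul := mul_le_mul_of_nonneg_left hLG hr0.le
        have hexp : r * (p (K / r) * (a - K / r) * ((1 - (1 - δ) / 4) / r))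
            = p (K / r) * ((a - K / r) * ((3 + δ) / 4)) := by
          field_simp
          ring
        rw [hexp] at hmul
        refine le_trans ?_ hmul
        have hnn : 0 ≤ (a - K / r) * ((3 + δ) / 4) :=
          mul_nonneg (by linarith) (by linarith)
        have h1 : θ * ((a - K / r) * ((3 + δ) / 4))
            ≤ p (K / r) * ((a - K / r) * ((3 + δ) / 4)) :=
          mul_le_mul_of_nonneg_right hpK hnn
        calc τ * (a - K / r) = θ * ((a - K / r) * ((3 + δ) / 4)) := by
              rw [hθ, hτ]; field_simp; ring
          _ ≤ p (K / r) * ((a - K / r) * ((3 + δ) / 4)) := h1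
      have hstep : (τ - δ) * a ≤ (1 + τ * K) / r := by
        have hsum : 1 / r + τ * (K / r) = (1 + τ * K) / r := by field_simp
        have hG2' : τ * a - τ * (K / r)
            ≤ r * ∫ t in (0:ℝ)..a, Real.exp (-(r * t)) * (a - t) * p t := by
          rw [← mul_sub]; exact hG2
        linarith [heq]
      have hfin : r * a ≤ (1 + τ * K) / (τ - δ) := by
        rw [le_div_iff₀ (by linarith : (0:ℝ) < τ - δ)]
        have h' := (le_div_iff₀ hr0).mp hstep
        linarith [h']
      exact le_trans hfin (le_max_right _ _)
    have T1 : Tendsto (fun r : ℝ => (1 - δ) * (r * ahat r)) atTop (𝓝 1) := by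
      rw [Metric.tendsto_nhds]
      intro ε hε
      set ε' : ℝ := min ε 1 with hε'
      have hε'0 : 0 < ε' := lt_min hε zero_lt_one
      have hε'1 : ε' ≤ 1 := min_le_right _ _
      have hε'ε : ε' ≤ ε := min_le_left _ _
      set M : ℝ := Real.log (4 / ε') with hM
      have hMexp : Real.exp (-M) = ε' / 4 := by
        rw [hM, Real.exp_neg, Real.exp_log (by positivity), inv_div]
      have hM0 : 0 ≤ M := Real.log_nonneg (by rw [le_div_iff₀ hε'0]; linarith)
      have hCM : 0 < C + M := by linarith
      have hη1 : 1 - ε' / (4 * (C + 1)) < 1 := by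
        have : 0 < ε' / (4 * (C + 1)) := by positivity
        linarith
      have hη2 : 1 - ε' / 4 < 1 := by
        have : 0 < ε' / 4 := by positivity
        linarith
      filter_upwards [hbd,
        (lcria_p_one hcont hp0 hCpos).eventually (eventually_ge_nhds hη1),
        (lcria_p_one hcont hp0 hCM).eventually (eventually_ge_nhds hη2)] with r hpack hp1 hp2
      obtain ⟨hr, ha, hbC⟩ := hpack
      have hr0 : 0 < r := lt_trans hrδpos hr
      have hrne : r ≠ 0 := ne_of_gt hr0
      obtain ⟨_, heq⟩ := hsol r hr
      have hUG := lcria_UG hcont hle hr0 (le_of_lt (hsol r hr).1)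
      have hLGf := lcria_LG_full hcont hanti hpos hr0 (le_of_lt (hsol r hr).1)
      have hUF := lcria_UF hpos hle (hint r hr0) hr0 (le_of_lt (hsol r hr).1)
      have hLF := lcria_LF hcont hanti hpos (hint r hr0) hr0 (le_of_lt (hsol r hr).1)
        (show (0:ℝ) ≤ M / r by positivity)
      set a : ℝ := ahat r with haa
      set b : ℝ := r * a with hb
      set eb : ℝ := Real.exp (-(r * a)) with heb
      set Gf : ℝ := ∫ t in (0:ℝ)..a, Real.exp (-(r * t)) * (a - t) * p t with hGf
      set F : ℝ := ∫ t in Ioi a, Real.exp (-(r * t)) * p t with hF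
      have hb0 : 0 ≤ b := by rw [hb]; positivity
      have heb1 : eb ≤ 1 := by
        rw [heb, show (1:ℝ) = Real.exp 0 by rw [Real.exp_zero]]
        exact Real.exp_le_exp.mpr (neg_nonpos.mpr (by positivity))
      have heb0 : 0 < eb := by rw [heb]; exact Real.exp_pos _
      have hconv : 1 - b ≤ eb := by
        have h := Real.add_one_le_exp (-(r * a))
        rw [heb, hb]; linarith
      have haC : a ≤ C / r := by
        rw [le_div_iff₀ hr0, mul_comm]
        rw [hb] at hbC
        exact hbC
      have hpa_low : 1 - ε' / (4 * (C + 1)) ≤ p a :=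
        le_trans hp1 (hanti (mem_Ici.mpr ha.le) (mem_Ici.mpr (by positivity)) haC)
      have hpa_hi : p a ≤ 1 := hle a ha.le
      have hsum : C / r + M / r = (C + M) / r := by rw [← add_div]
      have hle2 : a + M / r ≤ (C + M) / r := by rw [← hsum]; linarith
      have ham0 : (0:ℝ) ≤ a + M / r := by positivity
      have hp2' : 1 - ε' / 4 ≤ p (a + M / r) :=
        le_trans hp2 (hanti (mem_Ici.mpr ham0) (mem_Ici.mpr (by positivity)) hle2)
      have hp2hi : p (a + M / r) ≤ 1 := hle _ ham0
      have hsplit : Real.exp (-(r * (a + M / r))) = eb * (ε' / 4) := by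
        rw [← hMexp, heb, ← Real.exp_add]
        congr 1
        field_simp
        ring
      rw [hsplit] at hLF
      have hkey : (1 - δ) * b = b - r * (r * Gf) + r * F := by
        have h3 : δ * a = r * Gf - F := by linarith [heq]
        calc (1 - δ) * b = r * a - r * (δ * a) := by rw [hb]; ring
          _ = r * a - r * (r * Gf - F) := by rw [h3]
          _ = b - r * (r * Gf) + r * F := by rw [hb]; ring
      have hBnn : 0 ≤ b - 1 + eb := by linarith
      have hbC'' : b - 1 + eb ≤ C := by linarith
      have hUG' : r * (r * Gf) ≤ b - 1 + eb := by
        calc r * (r * Gf) = r ^ 2 * Gf := by ring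
          _ ≤ r ^ 2 * ((b - 1 + eb) / r ^ 2) :=
              mul_le_mul_of_nonneg_left hUG (by positivity)
          _ = b - 1 + eb := by field_simp
      have hLG' : p a * (b - 1 + eb) ≤ r * (r * Gf) := by
        calc p a * (b - 1 + eb) = r ^ 2 * (p a * ((b - 1 + eb) / r ^ 2)) := by
              field_simp
              try ring
          _ ≤ r ^ 2 * Gf := mul_le_mul_of_nonneg_left hLGf (by positivity)
          _ = r * (r * Gf) := by ring
      have hUF' : r * F ≤ eb := by
        have h := mul_le_mul_of_nonneg_left hUF hr0.le
        calc r * F ≤ r * (eb / r) := h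
          _ = eb := by field_simp
      have hLF' : p (a + M / r) * (eb - eb * (ε' / 4)) ≤ r * F := by
        have h := mul_le_mul_of_nonneg_left hLF hr0.le
        calc p (a + M / r) * (eb - eb * (ε' / 4))
            = r * (p (a + M / r) * ((eb - eb * (ε' / 4)) / r)) := by field_simp
          _ ≤ r * F := h
      have hup : (1 - δ) * b ≤ 1 + ε' / 4 := by
        have h1 : (1 - δ) * b ≤ b - p a * (b - 1 + eb) + eb := by linarith
        have h2 : b - p a * (b - 1 + eb) + eb = 1 + (1 - p a) * (b - 1 + eb) := by ring
        have h3 : (1 - p a) * (b - 1 + eb) ≤ ε' / (4 * (C + 1)) * C :=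
          mul_le_mul (by linarith) hbC'' hBnn (by positivity)
        have h4 : ε' / (4 * (C + 1)) * C ≤ ε' / 4 := lcria_arith1 hε'0 hCpos
        linarith
      have hdn : 1 - ε' < (1 - δ) * b := by
        have h1 : b - (b - 1 + eb) + p (a + M / r) * (eb - eb * (ε' / 4)) ≤ (1 - δ) * b := by
          linarith
        have h2 : b - (b - 1 + eb) + p (a + M / r) * (eb - eb * (ε' / 4))
            = 1 - eb * (1 - p (a + M / r) * (1 - ε' / 4)) := by ring
        have hq0 : (0:ℝ) ≤ p (a + M / r) := by linarith
        have h3 : p (a + M / r) * (1 - ε' / 4) ≤ 1 :=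
          lcria_mul_le_one hp2hi hq0 hε'0.le hε'1
        have h4 : 1 - ε' / 2 ≤ p (a + M / r) * (1 - ε' / 4) :=
          lcria_sq hε'0.le hε'1 hp2'
        have h5 : eb * (1 - p (a + M / r) * (1 - ε' / 4))
            ≤ 1 - p (a + M / r) * (1 - ε' / 4) :=
          lcria_ebq heb0.le heb1 h3
        linarith
      rw [Real.dist_eq, abs_lt]
      constructor
      · linarith
      · linarith
    have T2 := T1.const_mul (1 + π)
    have hfun : (fun r : ℝ => (1 + π) * ((1 - δ) * (r * ahat r))) = fun r : ℝ => r * ahat r := by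
      funext r
      rw [h1δ]
      field_simp
    rw [hfun] at T2
    simpa using T2
  · -- Part 4: blow-up at the threshold
    rw [tendsto_atTop]
    intro C
    set C' : ℝ := max C 1 with hC'
    have hC'1 : (1:ℝ) ≤ C' := le_max_right _ _
    have hC'pos : (0:ℝ) < C' := by linarith
    set m : ℝ := p (C' + 1) * (Real.exp (-((rδ + 1) * C')) * (1 - Real.exp (-rδ)) / (rδ + 1))
      with hm
    have hexprδ : Real.exp (-rδ) < 1 := Real.exp_lt_one_iff.mpr (by linarith)
    have hmpos : 0 < m := by
      apply mul_pos (hpos _ (by linarith))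
      apply div_pos _ (by linarith)
      apply mul_pos (Real.exp_pos _)
      linarith
    have htendρ : Tendsto (fun r : ℝ => r * ∫ t in Ioi (0:ℝ), Real.exp (-(r * t)) * p t)
        (𝓝[>] rδ) (𝓝 δ) := by
      rw [hrδ]
      exact (tendsto_id.mono_left nhdsWithin_le_nhds).mul (lcria_rho_cont hpos hint hrδpos)
    have hev1 : ∀ᶠ r : ℝ in 𝓝[>] rδ,
        r * (∫ t in Ioi (0:ℝ), Real.exp (-(r * t)) * p t) < δ + m / C' :=
      htendρ.eventually (eventually_lt_nhds
        (by linarith [div_pos hmpos hC'pos] : δ < δ + m / C'))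
    have hev2 : ∀ᶠ r : ℝ in 𝓝[>] rδ, r < rδ + 1 :=
      (eventually_lt_nhds (by linarith : rδ < rδ + 1)).filter_mono nhdsWithin_le_nhds
    filter_upwards [hev1, hev2, self_mem_nhdsWithin] with r hρ hr1 hrmem
    have hrδr : rδ < r := hrmem
    have hr0 : 0 < r := lt_trans hrδpos hrδr
    obtain ⟨ha, heq⟩ := hsol r hrδr
    set a : ℝ := ahat r
    by_contra hcon
    push_neg at hcon
    have hlt : a < C' := lt_of_lt_of_le hcon (le_max_left _ _)
    -- lower bound for F
    have hLF := lcria_LF hcont hanti hpos (hint r hr0) hr0 ha.le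
      (by linarith : (0:ℝ) ≤ C' + 1 - a)
    rw [show a + (C' + 1 - a) = C' + 1 by ring] at hLF
    have hFm : m ≤ ∫ t in Ioi a, Real.exp (-(r * t)) * p t := by
      refine le_trans ?_ hLF
      rw [hm]
      apply mul_le_mul_of_nonneg_left _ (hpos _ (by linarith)).le
      have h1 : Real.exp (-((rδ + 1) * C')) ≤ Real.exp (-(r * a)) := by
        apply Real.exp_le_exp.mpr
        have h' := mul_le_mul (le_of_lt hr1) (le_of_lt hlt) ha.le (by linarith)
        linarith
      have h2 : Real.exp (-(r * (C' + 1))) ≤ Real.exp (-rδ) * Real.exp (-(r * a)) := by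
        rw [← Real.exp_add]
        apply Real.exp_le_exp.mpr
        have h' := mul_le_mul_of_nonneg_left (show (1:ℝ) ≤ C' + 1 - a by linarith) hr0.le
        nlinarith [h']
      have h3 : (0:ℝ) ≤ Real.exp (-(r * a)) - Real.exp (-(r * (C' + 1))) := by
        have h' : Real.exp (-(r * (C' + 1))) ≤ Real.exp (-(r * a)) := by
          apply Real.exp_le_exp.mpr
          have h'' := mul_le_mul_of_nonneg_left (show a ≤ C' + 1 by linarith) hr0.le
          linarith
        linarith
      apply div_le_div₀ h3 _ hr0 (by linarith)
      have h4 := mul_le_mul_of_nonneg_right h1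
        (show (0:ℝ) ≤ 1 - Real.exp (-rδ) by linarith)
      nlinarith [h4, h2]
    -- upper bound for F
    have hUGt := lcria_UG_total hcont hpos (hint r hr0) ha.le
    have hFu : (∫ t in Ioi a, Real.exp (-(r * t)) * p t)
        ≤ a * (r * ∫ t in Ioi (0:ℝ), Real.exp (-(r * t)) * p t) - δ * a := by
      have h' : r * (∫ t in (0:ℝ)..a, Real.exp (-(r * t)) * (a - t) * p t)
          ≤ r * (a * ∫ t in Ioi (0:ℝ), Real.exp (-(r * t)) * p t) :=
        mul_le_mul_of_nonneg_left hUGt hr0.le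
      nlinarith [heq, h']
    set ρ : ℝ := r * ∫ t in Ioi (0:ℝ), Real.exp (-(r * t)) * p t with hρdef
    have hx : 0 < ρ - δ := by
      by_contra hxc
      push_neg at hxc
      have h' : a * (ρ - δ) ≤ 0 := mul_nonpos_of_nonneg_of_nonpos ha.le hxc
      nlinarith [hFm, hFu, hmpos]
    have hfin : a * (ρ - δ) < m := by
      calc a * (ρ - δ) < C' * (ρ - δ) := mul_lt_mul_of_pos_right hlt hx
        _ < C' * (m / C') := by
            apply mul_lt_mul_of_pos_left _ hC'pos
            linarith
        _ = m := by field_simp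
    have h5 : a * ρ - δ * a < m := by
      rw [mul_sub, mul_comm a δ] at hfin
      exact hfin
    linarith
end
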